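/- arXiv:2507.18432 — 4 statements merged into one kernel-verified Lean document; each statement's English description precedes it below -/
import Mathlib

section
/- Let M be a 3×6 matrix over ℂ with columns v_1,…,v_6, and for a 3-element subset J ⊆ {1,…,6} let P_J(M) be the 3×3 minor of M on the columns indexed by J. Then P_{134}P_{256} − P_{156}P_{234} = P_{124}P_{356} − P_{123}P_{456}. -/
/-!
The identity is the Grassmann–Plücker relation for the columns `v₀, v₁, v₂, v₃` against the pair
`v₄, v₅`. Expanding `det (x, v₄, v₅)` along its first column writes it as a linear form `φ x`, and
the signed maximal minors of `(v₀ | v₁ | v₂ | v₃)` are the coefficients of the linear dependence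
`∑ⱼ (-1)ʲ det (v_{J \ j}) vⱼ = 0` (Laplace expansion of a determinant with a repeated row).
Applying `φ` to it gives the relation.
-/

open Matrix Finset

variable {R ι : Type*} [CommRing R]

theorem Matrix.sum_alternating_mul_det_submatrix_succAbove_eq_zero {n : ℕ}
    (A : Matrix (Fin n) (Fin (n + 1)) R) (r : Fin n) :
    ∑ j : Fin (n + 1), (-1) ^ (j : ℕ) * A r j * (A.submatrix id j.succAbove).det = 0 := by
  have h := det_zero_of_row_eq (M := of (vecCons (A r) A)) (Fin.succ_ne_zero r).symm rfl
  rwa [det_succ_row_zero] at h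

theorem Matrix.det_submatrix_vecCons {m : ℕ} (M : Matrix (Fin (m + 1)) ι R) (x : ι)
    (b : Fin m → ι) :
    (M.submatrix id (vecCons x b)).det
      = ∑ i : Fin (m + 1), (-1) ^ (i : ℕ) * M i x * (M.submatrix i.succAbove b).det :=
  det_succ_column_zero _

theorem Matrix.sum_alternating_det_mul_det_eq_zero {m : ℕ} (M : Matrix (Fin (m + 1)) ι R)
    (a : Fin (m + 2) → ι) (b : Fin m → ι) :
    ∑ j : Fin (m + 2), (-1) ^ (j : ℕ) * (M.submatrix id (vecCons (a j) b)).det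
      * (M.submatrix id (a ∘ j.succAbove)).det = 0 := by
  simp_rw [det_submatrix_vecCons, mul_sum, sum_mul]
  rw [sum_comm]
  refine sum_eq_zero fun i _ => ?_
  calc _ = (-1) ^ (i : ℕ) * (M.submatrix i.succAbove b).det * ∑ j : Fin (m + 2),
          (-1) ^ (j : ℕ) * M i (a j) * (M.submatrix id (a ∘ j.succAbove)).det := by
        rw [mul_sum]
        exact sum_congr rfl fun j _ => by ring
    _ = 0 := mul_eq_zero_of_right _
        (sum_alternating_mul_det_submatrix_succAbove_eq_zero (M.submatrix id a) i)

/-- For a `3 × 6` complex matrix `M` with Plücker coordinates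
`P_J = det (columns J of M)`, one has
`P₁₃₄ P₂₅₆ − P₁₅₆ P₂₃₄ = P₁₂₄ P₃₅₆ − P₁₂₃ P₄₅₆`
(columns written `1,…,6` in the informal statement, `0,…,5` here). -/
theorem plucker_identity_Gr36 (M : Matrix (Fin 3) (Fin 6) ℂ)
    (P : Fin 6 → Fin 6 → Fin 6 → ℂ)
    (hP : ∀ i j k, P i j k = (M.submatrix id ![i, j, k]).det) :
    P 0 2 3 * P 1 4 5 - P 0 4 5 * P 1 2 3
      = P 0 1 3 * P 2 4 5 - P 0 1 2 * P 3 4 5 := by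
  obtain ⟨h0, h1, h2, h3⟩ : (![0, 1, 2, 3] ∘ Fin.succ : Fin 3 → Fin 6) = ![1, 2, 3] ∧
      (![0, 1, 2, 3] ∘ Fin.succAbove 1 : Fin 3 → Fin 6) = ![0, 2, 3] ∧
      (![0, 1, 2, 3] ∘ Fin.succAbove 2 : Fin 3 → Fin 6) = ![0, 1, 3] ∧
      (![0, 1, 2, 3] ∘ Fin.succAbove 3 : Fin 3 → Fin 6) = ![0, 1, 2] := by
    decide
  have h := M.sum_alternating_det_mul_det_eq_zero (m := 2) ![0, 1, 2, 3] ![4, 5]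
  simp [Fin.sum_univ_four, h0, h1, h2, h3, ← hP] at h
  linear_combination -h
end

section
/- Let M be a 3×6 matrix over ℂ with columns v_1,…,v_6. Then det(v_1 × v_2, v_3 × v_4, v_5 × v_6) = P_{134}(M)·P_{256}(M) − P_{156}(M)·P_{234}(M), where × is the cross product on ℂ³ and P_{ijk} is the 3×3 minor of M on columns i,j,k. -/
/-!
Writing the determinant as the triple product `(X ⨯₃ Y) ⬝ᵥ Z` with `X = v₁ ⨯₃ v₂`,
`Y = v₃ ⨯₃ v₄`, `Z = v₅ ⨯₃ v₆`, the vector triple product expansion gives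
`X ⨯₃ Y = det(v₁, v₃, v₄) • v₂ - det(v₂, v₃, v₄) • v₁`, and dotting with `Z` turns each
term into a product of two `3 × 3` minors.
-/

open Matrix

theorem det_cross_cross_cross {R : Type*} [CommRing R] (a b c d e f : Fin 3 → R) :
    det ![a ⨯₃ b, c ⨯₃ d, e ⨯₃ f] =
      det ![a, c, d] * det ![b, e, f] - det ![a, e, f] * det ![b, c, d] := by
  calc det ![a ⨯₃ b, c ⨯₃ d, e ⨯₃ f]
      = (a ⨯₃ b) ⨯₃ (c ⨯₃ d) ⬝ᵥ e ⨯₃ f := by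
        rw [← triple_product_eq_det, triple_product_permutation, triple_product_permutation,
          dotProduct_comm]
    _ = ((a ⬝ᵥ c ⨯₃ d) • b - (b ⬝ᵥ c ⨯₃ d) • a) ⬝ᵥ e ⨯₃ f := by
        rw [cross_cross_eq_smul_sub_smul]
    _ = det ![a, c, d] * det ![b, e, f] - det ![a, e, f] * det ![b, c, d] := by
        simp only [sub_dotProduct, smul_dotProduct, triple_product_eq_det, smul_eq_mul]
        ring

theorem det_submatrix_id_vecCons {R ι : Type*} [CommRing R] (M : Matrix (Fin 3) ι R)
    (i j k : ι) : (M.submatrix id ![i, j, k]).det = det ![Mᵀ i, Mᵀ j, Mᵀ k] := by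
  rw [← det_transpose]
  congr 1
  ext r s
  fin_cases r <;> rfl

/-- For a `3 × 6` complex matrix `M` with columns `v₀,…,v₅` (written `v₁,…,v₆` informally),
`det (v₁×v₂, v₃×v₄, v₅×v₆) = P₁₃₄ P₂₅₆ − P₁₅₆ P₂₃₄`, where `P_{ijk}` is the maximal minor
of `M` on columns `i,j,k`. -/
theorem quadratic_cluster_variable_as_plucker (M : Matrix (Fin 3) (Fin 6) ℂ)
    (P : Fin 6 → Fin 6 → Fin 6 → ℂ)
    (hP : ∀ i j k, P i j k = (M.submatrix id ![i, j, k]).det) :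
    Matrix.det (Matrix.of fun (r c : Fin 3) =>
      ![crossProduct (fun i => M i 0) (fun i => M i 1),
        crossProduct (fun i => M i 2) (fun i => M i 3),
        crossProduct (fun i => M i 4) (fun i => M i 5)] c r)
      = P 0 2 3 * P 1 4 5 - P 0 4 5 * P 1 2 3 := by
  simp only [hP, det_submatrix_id_vecCons]
  exact (det_transpose _).trans (det_cross_cross_cross _ _ _ _ _ _)
end

section
/- Let T be a standard Young tableau of rectangular shape a×b, let P denote promotion and E evacuation. Then E ∘ P = P^{-1} ∘ E as maps on standard Young tableaux of shape a×b; consequently P and E generate a dihedral group action on the set of standard Young tableaux of shape a×b. -/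
/-- `IsSYT a b T` says that `T` (restricted to the rectangular grid
`{0,…,a−1} × {0,…,b−1}`, rows indexed from the top and columns from the left) is a
standard Young tableau of rectangular shape `a × b`: a filling by the numbers
`1,…,ab`, each used exactly once, strictly increasing along each row and down each
column. -/
def IsSYT (a b : ℕ) (T : ℕ → ℕ → ℕ) : Prop :=
  (∀ i j, i < a → j < b → 1 ≤ T i j ∧ T i j ≤ a * b) ∧
  (∀ k, 1 ≤ k → k ≤ a * b → ∃! p : ℕ × ℕ, p.1 < a ∧ p.2 < b ∧ T p.1 p.2 = k) ∧
  (∀ i j j', i < a → j < j' → j' < b → T i j < T i j') ∧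
  (∀ i i' j, i < i' → i' < a → j < b → T i j < T i' j)

/-- One step of the jeu-de-taquin slide used in promotion: from a cell of the `a × b`
grid, move to the neighbour to the right or below carrying the smaller entry of `T`
(moving straight if only one of the two neighbours exists, and staying put at the
bottom-right corner). -/
def slideNext (a b : ℕ) (T : ℕ → ℕ → ℕ) (c : ℕ × ℕ) : ℕ × ℕ :=
  if c.1 + 1 < a then
    if c.2 + 1 < b then
      if T (c.1 + 1) c.2 < T c.1 (c.2 + 1) then (c.1 + 1, c.2) else (c.1, c.2 + 1)
    else (c.1 + 1, c.2)
  else if c.2 + 1 < b then (c.1, c.2 + 1) else c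

open Classical in
/-- Schützenberger promotion on fillings of the `a × b` grid: delete the entry `1`
(which for a standard tableau sits in the top-left cell `(0,0)`), slide the empty box
along the jeu-de-taquin path determined by `slideNext` until it reaches the
bottom-right corner, fill that corner with `ab + 1`, and subtract `1` from every
entry.  Cells outside the grid are left unchanged. -/
noncomputable def promo (a b : ℕ) (T : ℕ → ℕ → ℕ) : ℕ → ℕ → ℕ := fun i j =>
  if i < a ∧ j < b then
    if i = a - 1 ∧ j = b - 1 then a * b
    else if ∃ t : ℕ, (slideNext a b T)^[t] (0, 0) = (i, j) then
      T (slideNext a b T (i, j)).1 (slideNext a b T (i, j)).2 - 1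
    else T i j - 1
  else T i j

/-- Evacuation realized as rotate-and-complement:
`E(T)(i,j) = ab + 1 − T(a−1−i, b−1−j)` on the grid (0-indexed). -/
def evac (a b : ℕ) (T : ℕ → ℕ → ℕ) : ℕ → ℕ → ℕ := fun i j =>
  if i < a ∧ j < b then a * b + 1 - T (a - 1 - i) (b - 1 - j) else T i j


/-!
Let `p₀ = (0,0), p₁, …, pₙ = (a-1,b-1)`, `n = a + b - 2`, be the jeu-de-taquin path of `T`; `pₛ`
lies on the `s`-th antidiagonal. Promotion moves the entries along the path back by one step,
`P(T)(pₛ) = T(pₛ₊₁) - 1`, and lowers every other entry by one. In `E(P(T))` the entries are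
rotated and complemented, so at the rotated cell of `pₛ₊₁` the row or column inequality of `T`
that made the path of `T` step from `pₛ` to `pₛ₊₁` now makes the path of `E(P(T))` step to the
rotated cell of `pₛ`: the slide path of `E(P(T))` is the path of `T`, rotated and run backwards.
Promoting `E(P(T))` along it shifts the entries back, which gives `P(E(P(T))) = E(T)` cell by
cell.
-/

def slidePath (a b : ℕ) (T : ℕ → ℕ → ℕ) (t : ℕ) : ℕ × ℕ := (slideNext a b T)^[t] (0, 0)

def rotate180 (a b : ℕ) (c : ℕ × ℕ) : ℕ × ℕ := (a - 1 - c.1, b - 1 - c.2)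

section

variable {a b : ℕ} (T : ℕ → ℕ → ℕ)

theorem slideNext_corner (ha : 0 < a) (hb : 0 < b) :
    slideNext a b T (a - 1, b - 1) = (a - 1, b - 1) := by
  simp only [slideNext]
  rw [if_neg (by omega), if_neg (by omega)]

theorem slideNext_eq_down {c : ℕ × ℕ} (h : c.1 + 1 < a)
    (hlt : c.2 + 1 < b → T (c.1 + 1) c.2 < T c.1 (c.2 + 1)) :
    slideNext a b T c = (c.1 + 1, c.2) := by
  by_cases hc : c.2 + 1 < b <;> simp [slideNext, h, hc, hlt]

theorem slideNext_eq_right {c : ℕ × ℕ} (h : c.2 + 1 < b)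
    (hle : c.1 + 1 < a → T c.1 (c.2 + 1) ≤ T (c.1 + 1) c.2) :
    slideNext a b T c = (c.1, c.2 + 1) := by
  by_cases hc : c.1 + 1 < a <;> simp [slideNext, h, hc, hle]

theorem slideNext_eq_down_or_right {c : ℕ × ℕ} (hc : c.1 + c.2 < a + b - 2) :
    (slideNext a b T c = (c.1 + 1, c.2) ∧ c.1 + 1 < a) ∨
      (slideNext a b T c = (c.1, c.2 + 1) ∧ c.2 + 1 < b) := by
  by_cases hr : c.2 + 1 < b ∧ (c.1 + 1 < a → T c.1 (c.2 + 1) ≤ T (c.1 + 1) c.2)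
  · exact .inr ⟨slideNext_eq_right T hr.1 hr.2, hr.1⟩
  · have hd : c.1 + 1 < a := by omega
    refine .inl ⟨slideNext_eq_down T hd fun h => ?_, hd⟩
    by_contra h'
    exact hr ⟨h, fun _ => not_lt.mp h'⟩

@[simp]
theorem slidePath_zero : slidePath a b T 0 = (0, 0) := rfl

theorem slidePath_succ (t : ℕ) :
    slidePath a b T (t + 1) = slideNext a b T (slidePath a b T t) :=
  Function.iterate_succ_apply' _ _ _

theorem slidePath_lt_and_add_eq (ha : 0 < a) (hb : 0 < b) {t : ℕ} (ht : t ≤ a + b - 2) :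
    (slidePath a b T t).1 < a ∧ (slidePath a b T t).2 < b ∧
      (slidePath a b T t).1 + (slidePath a b T t).2 = t := by
  induction t with
  | zero => exact ⟨ha, hb, rfl⟩
  | succ t ih =>
    obtain ⟨-, -, hsum⟩ := ih (by omega)
    rcases slideNext_eq_down_or_right (a := a) (b := b) T (c := slidePath a b T t) (by omega) with
      ⟨hstep, hlt⟩ | ⟨hstep, hlt⟩ <;> simp only [slidePath_succ, hstep] <;> omega

theorem slidePath_eq_corner (ha : 0 < a) (hb : 0 < b) {t : ℕ} (ht : a + b - 2 ≤ t) :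
    slidePath a b T t = (a - 1, b - 1) := by
  induction t, ht using Nat.le_induction with
  | base =>
    obtain ⟨h1, h2, h3⟩ := slidePath_lt_and_add_eq T ha hb le_rfl
    ext <;> omega
  | succ t _ ih => rw [slidePath_succ, ih, slideNext_corner T ha hb]

theorem exists_slidePath_eq_iff {i j : ℕ} (hi : i < a) (hj : j < b) :
    (∃ t, slidePath a b T t = (i, j)) ↔ slidePath a b T (i + j) = (i, j) := by
  refine ⟨fun ⟨t, ht⟩ => ?_, fun h => ⟨_, h⟩⟩
  rcases le_total t (a + b - 2) with hle | hle
  · obtain ⟨-, -, hsum⟩ := slidePath_lt_and_add_eq T (by omega) (by omega) hle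
    rw [ht] at hsum
    rwa [hsum]
  · rw [slidePath_eq_corner T (by omega) (by omega) hle, Prod.mk.injEq] at ht
    rw [slidePath_eq_corner T (by omega) (by omega) (by omega), ← ht.1, ← ht.2]

theorem promo_apply_corner (ha : 0 < a) (hb : 0 < b) : promo a b T (a - 1) (b - 1) = a * b := by
  simp only [promo, and_self, if_true]
  rw [if_pos (by omega)]

theorem promo_apply_slidePath (ha : 0 < a) (hb : 0 < b) {s : ℕ} (hs : s < a + b - 2) :
    promo a b T (slidePath a b T s).1 (slidePath a b T s).2 =
      T (slidePath a b T (s + 1)).1 (slidePath a b T (s + 1)).2 - 1 := by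
  obtain ⟨h1, h2, h3⟩ := slidePath_lt_and_add_eq T ha hb hs.le
  simp only [promo]
  rw [if_pos ⟨h1, h2⟩, if_neg (by omega), if_pos ⟨s, rfl⟩, Prod.mk.eta, slidePath_succ]

theorem promo_apply_of_slidePath_ne {i j : ℕ} (hi : i < a) (hj : j < b)
    (h : slidePath a b T (i + j) ≠ (i, j)) : promo a b T i j = T i j - 1 := by
  have hcorner : ¬(i = a - 1 ∧ j = b - 1) := by
    rintro ⟨rfl, rfl⟩
    exact h (slidePath_eq_corner T (by omega) (by omega) (by omega))
  have hoff : ¬∃ t, slidePath a b T t = (i, j) := by rwa [exists_slidePath_eq_iff T hi hj]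
  simp only [promo]
  rw [if_pos ⟨hi, hj⟩, if_neg hcorner,
    if_neg (show ¬∃ t, (slideNext a b T)^[t] (0, 0) = (i, j) from hoff)]

theorem evac_apply_rotate {W : ℕ → ℕ → ℕ} {i j : ℕ} (hi : i < a) (hj : j < b) :
    evac a b W (a - 1 - i) (b - 1 - j) = a * b + 1 - W i j := by
  simp only [evac]
  rw [if_pos (by omega), Nat.sub_sub_self (by omega : i ≤ a - 1),
    Nat.sub_sub_self (by omega : j ≤ b - 1)]

end

section

variable {a b : ℕ} {T : ℕ → ℕ → ℕ}

theorem IsSYT.apply_zero_zero (hT : IsSYT a b T) (ha : 0 < a) (hb : 0 < b) :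
    T 0 0 = 1 := by
  obtain ⟨⟨i, j⟩, ⟨hi, hj, hij⟩, -⟩ :=
    hT.2.1 1 le_rfl (Nat.one_le_iff_ne_zero.mpr (Nat.mul_pos ha hb).ne')
  have hrow : T 0 0 ≤ T 0 j := by
    rcases Nat.eq_zero_or_pos j with rfl | hj0
    · exact le_rfl
    · exact (hT.2.2.1 0 0 j ha hj0 hj).le
  have hcol : T 0 j ≤ T i j := by
    rcases Nat.eq_zero_or_pos i with rfl | hi0
    · exact le_rfl
    · exact (hT.2.2.2 0 i j hi0 hi hj).le
  have := (hT.1 0 0 ha hb).1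
  simp only at hij
  omega

theorem slideNext_evac_promo_rotate180 (hT : IsSYT a b T) (ha : 0 < a) (hb : 0 < b) {s : ℕ}
    (hs : s < a + b - 2) :
    slideNext a b (evac a b (promo a b T)) (rotate180 a b (slidePath a b T (s + 1))) =
      rotate180 a b (slidePath a b T s) := by
  obtain ⟨hX, hY, hsum⟩ := slidePath_lt_and_add_eq T ha hb hs.le
  have hshift := promo_apply_slidePath T ha hb hs
  have hdiag : ∀ i j, i < a → j < b → i + j = s → (i, j) ≠ slidePath a b T s →
      promo a b T i j = T i j - 1 := fun i j hi hj hij hne =>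
    promo_apply_of_slidePath_ne T hi hj (by rw [hij]; exact hne.symm)
  rw [slidePath_succ] at hshift ⊢
  generalize slidePath a b T s = p at *
  obtain ⟨X, Y⟩ := p
  dsimp only at hX hY hsum hshift
  rcases slideNext_eq_down_or_right (a := a) (b := b) T (c := (X, Y)) (by omega) with
    ⟨hstep, hlt⟩ | ⟨hstep, hlt⟩ <;> rw [hstep] at hshift ⊢ <;> dsimp only [rotate180] at hshift hlt ⊢
  · rw [slideNext_eq_down _ (by omega)]
    · ext <;> omega
    intro hY1
    dsimp only at hY1 ⊢
    rw [show a - 1 - (X + 1) + 1 = a - 1 - X by omega, show b - 1 - Y + 1 = b - 1 - (Y - 1) by omega,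
      evac_apply_rotate hX hY, evac_apply_rotate hlt (by omega), hshift,
      hdiag (X + 1) (Y - 1) hlt (by omega) (by omega) (by simp)]
    have := hT.2.2.1 (X + 1) (Y - 1) Y hlt (by omega) hY
    have := hT.1 (X + 1) Y hlt hY
    have := hT.1 (X + 1) (Y - 1) hlt (by omega)
    omega
  · rw [slideNext_eq_right _ (by omega)]
    · ext <;> omega
    intro hX1
    dsimp only at hX1 ⊢
    rw [show b - 1 - (Y + 1) + 1 = b - 1 - Y by omega, show a - 1 - X + 1 = a - 1 - (X - 1) by omega,
      evac_apply_rotate hX hY, evac_apply_rotate (by omega) hlt, hshift,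
      hdiag (X - 1) (Y + 1) (by omega) hlt (by omega) (by simp)]
    have := hT.2.2.2 (X - 1) X (Y + 1) (by omega) hX hlt
    have := hT.1 X (Y + 1) hX hlt
    have := hT.1 (X - 1) (Y + 1) (by omega) hlt
    omega

theorem slidePath_evac_promo (hT : IsSYT a b T) (ha : 0 < a) (hb : 0 < b) {t : ℕ}
    (ht : t ≤ a + b - 2) :
    slidePath a b (evac a b (promo a b T)) t = rotate180 a b (slidePath a b T (a + b - 2 - t)) := by
  induction t with
  | zero =>
    rw [slidePath_zero, Nat.sub_zero, slidePath_eq_corner T ha hb le_rfl, rotate180, Nat.sub_self,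
      Nat.sub_self]
  | succ t ih =>
    rw [slidePath_succ, ih (by omega), show a + b - 2 - t = a + b - 2 - (t + 1) + 1 by omega,
      slideNext_evac_promo_rotate180 hT ha hb (by omega)]

theorem promo_evac_promo_apply_of_slidePath_eq (hT : IsSYT a b T) {i j : ℕ} (hi : i < a)
    (hj : j < b) (hpos : 0 < i + j) (h : slidePath a b T (i + j) = (i, j)) :
    promo a b (evac a b (promo a b T)) (a - 1 - i) (b - 1 - j) = a * b + 1 - T i j := by
  have ha : 0 < a := by omega
  have hb : 0 < b := by omega
  set n := a + b - 2
  have hpath := slidePath_evac_promo hT ha hb (t := n - (i + j)) (by omega)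
  have hnext := slidePath_evac_promo hT ha hb (t := n - (i + j) + 1) (by omega)
  rw [show n - (n - (i + j)) = i + j by omega, h] at hpath
  rw [show n - (n - (i + j) + 1) = i + j - 1 by omega] at hnext
  have hshift := promo_apply_slidePath (evac a b (promo a b T)) ha hb (s := n - (i + j)) (by omega)
  rw [hpath, hnext] at hshift
  obtain ⟨hX, hY, -⟩ := slidePath_lt_and_add_eq T ha hb (t := i + j - 1) (by omega)
  have hprev := promo_apply_slidePath T ha hb (s := i + j - 1) (by omega)
  rw [Nat.sub_add_cancel hpos, h] at hprev
  dsimp only [rotate180] at hshift hprev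
  rw [hshift, evac_apply_rotate hX hY, hprev]
  have := hT.1 i j hi hj
  omega

theorem promo_evac_promo_apply_of_slidePath_ne (hT : IsSYT a b T) {i j : ℕ} (hi : i < a)
    (hj : j < b) (h : slidePath a b T (i + j) ≠ (i, j)) :
    promo a b (evac a b (promo a b T)) (a - 1 - i) (b - 1 - j) = a * b + 1 - T i j := by
  have ha : 0 < a := by omega
  have hb : 0 < b := by omega
  rw [promo_apply_of_slidePath_ne _ (by omega) (by omega), evac_apply_rotate hi hj,
    promo_apply_of_slidePath_ne T hi hj h]
  · have := hT.1 i j hi hj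
    omega
  rw [slidePath_evac_promo hT ha hb (by omega),
    show a + b - 2 - (a - 1 - i + (b - 1 - j)) = i + j by omega]
  obtain ⟨hX, hY, -⟩ := slidePath_lt_and_add_eq T ha hb (t := i + j) (by omega)
  contrapose! h
  simp only [rotate180, Prod.ext_iff] at h ⊢
  omega

end

/-- **Promotion and evacuation generate a dihedral action**: on rectangular standard
Young tableaux of shape `a × b` one has `E ∘ P = P⁻¹ ∘ E`.  Since promotion `P` is a
bijection on such tableaux, this is equivalently expressed as `P ∘ E ∘ P = E`. -/
theorem promo_evac_dihedral (a b : ℕ) (T : ℕ → ℕ → ℕ) (hT : IsSYT a b T) :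
    promo a b (evac a b (promo a b T)) = evac a b T := by
  funext i j
  by_cases hij : i < a ∧ j < b
  swap
  · simp only [promo, evac, if_neg hij]
  obtain ⟨i, hi, rfl⟩ : ∃ i' < a, i = a - 1 - i' := ⟨a - 1 - i, by omega, by omega⟩
  obtain ⟨j, hj, rfl⟩ : ∃ j' < b, j = b - 1 - j' := ⟨b - 1 - j, by omega, by omega⟩
  rw [evac_apply_rotate hi hj]
  by_cases hpath : slidePath a b T (i + j) = (i, j)
  · rcases Nat.eq_zero_or_pos (i + j) with h0 | hpos
    · obtain ⟨rfl, rfl⟩ : i = 0 ∧ j = 0 := by omega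
      rw [Nat.sub_zero, Nat.sub_zero, promo_apply_corner _ hi hj, hT.apply_zero_zero hi hj]
      omega
    · exact promo_evac_promo_apply_of_slidePath_eq hT hi hj hpos hpath
  · exact promo_evac_promo_apply_of_slidePath_ne hT hi hj hpath
end

section
/- Let T be a standard Young tableau of rectangular shape 4×b and 1 ≤ i ≤ 3, and let c be the long cycle (1 2 ⋯ 4b) in the symmetric group on {1,…,4b}. Then c^{-1} ∘ prom_i(T) ∘ c = prom_i(P(T)), where P is promotion; i.e., promotion permutations rotate under promotion of the tableau. -/
/-- `promoPermSpec a b i T σ` says that `σ` realizes the `i`-th promotion permutation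
`prom_i(T)` of a rectangular standard Young tableau `T` of shape `a × b` (rows of the
tableau are 0-indexed here, so the paper's rows `i` and `i+1` are rows `i−1` and `i`):
`σ` restricts to a bijection of `{1,…,ab}`, and for each `j ∈ {1,…,ab}` there is a step
`t` of the promotion slide path of `P^{j−1}(T)` at which the path moves down from row
`i−1` to row `i` — the entry `p^{i,j}` carried up at that step is the value of
`P^{j−1}(T)` at the cell below — and `σ(j) ≡ p^{i,j} + j − 1 (mod ab)`. -/
def promoPermSpec (a b i : ℕ) (T : ℕ → ℕ → ℕ) (σ : ℕ → ℕ) : Prop :=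
  Set.BijOn σ (Set.Icc 1 (a * b)) (Set.Icc 1 (a * b)) ∧
  ∀ j ∈ Set.Icc 1 (a * b), ∃ t : ℕ,
    (slideNext a b ((promo a b)^[j - 1] T)
        ((slideNext a b ((promo a b)^[j - 1] T))^[t] (0, 0))).1
      = ((slideNext a b ((promo a b)^[j - 1] T))^[t] (0, 0)).1 + 1 ∧
    ((slideNext a b ((promo a b)^[j - 1] T))^[t] (0, 0)).1 + 1 = i ∧
    σ j ≡ ((promo a b)^[j - 1] T) i
        ((slideNext a b ((promo a b)^[j - 1] T))^[t] (0, 0)).2 + j - 1 [MOD a * b]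

/-!
Both `prom_i(T)(j + 1)` and `prom_i(P(T))(j)` are read off the slide path of the same tableau
`P^j(T)`, and a slide path descends into row `i` at most once. So for `j < 4b` both carry the
same entry `p`, and they are `p + j` and `p + j - 1` modulo `4b` respectively; this is
`prom_i(T) ∘ c = c ∘ prom_i(P(T))` away from `4b`. At `4b` the identity is forced, since both
sides are bijections of `{1, …, 4b}` agreeing at every other point.
-/

lemma slideNext_fst_eq_or_eq_succ (a b : ℕ) (T : ℕ → ℕ → ℕ) (c : ℕ × ℕ) :
    (slideNext a b T c).1 = c.1 ∨ (slideNext a b T c).1 = c.1 + 1 := by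
  unfold slideNext
  split_ifs <;> simp

lemma monotone_fst_iterate_slideNext (a b : ℕ) (T : ℕ → ℕ → ℕ) (c : ℕ × ℕ) :
    Monotone fun t => ((slideNext a b T)^[t] c).1 := by
  refine monotone_nat_of_le_succ fun t => ?_
  rw [Function.iterate_succ_apply']
  rcases slideNext_fst_eq_or_eq_succ a b T ((slideNext a b T)^[t] c) with h | h <;> omega

def DescendsTo (a b : ℕ) (T : ℕ → ℕ → ℕ) (i t : ℕ) : Prop :=
  (slideNext a b T ((slideNext a b T)^[t] (0, 0))).1 = ((slideNext a b T)^[t] (0, 0)).1 + 1 ∧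
    ((slideNext a b T)^[t] (0, 0)).1 + 1 = i

/-- The slide path never moves up, so it enters each row at most once. -/
lemma DescendsTo.unique {a b : ℕ} {T : ℕ → ℕ → ℕ} {i t t' : ℕ}
    (h : DescendsTo a b T i t) (h' : DescendsTo a b T i t') : t = t' := by
  have mono := monotone_fst_iterate_slideNext a b T (0, 0)
  have key : ∀ {s s'}, DescendsTo a b T i s → DescendsTo a b T i s' → ¬ s < s' :=
    fun {s s'} hs hs' hlt => by
      have hm := mono (Nat.succ_le_of_lt hlt)
      simp only [Function.iterate_succ_apply'] at hm
      exact absurd hm (by unfold DescendsTo at hs hs'; omega)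
  exact le_antisymm (not_lt.mp (key h' h)) (not_lt.mp (key h h'))

lemma Nat.ModEq.eq_of_mem_Icc {N x y : ℕ} (h : x ≡ y [MOD N])
    (hx : x ∈ Set.Icc 1 N) (hy : y ∈ Set.Icc 1 N) : x = y := by
  obtain ⟨hx1, hx2⟩ := hx
  obtain ⟨hy1, hy2⟩ := hy
  rcases le_total x y with hle | hle
  · have := Nat.eq_zero_of_dvd_of_lt ((Nat.modEq_iff_dvd' hle).mp h) (by omega)
    omega
  · have := Nat.eq_zero_of_dvd_of_lt ((Nat.modEq_iff_dvd' hle).mp h.symm) (by omega)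
    omega

/-- The long cycle `c = (1 2 ⋯ N)` on `{1, …, N}`. -/
def cycleSucc (N x : ℕ) : ℕ := if x = N then 1 else x + 1

lemma cycleSucc_modEq {N x : ℕ} (hx : x ≤ N) : cycleSucc N x ≡ x + 1 [MOD N] := by
  unfold cycleSucc
  split_ifs with h
  · subst h
    exact (Nat.modEq_iff_dvd' (by omega)).mpr (by simp)
  · rfl

lemma cycleSucc_mem_Icc {N x : ℕ} (hx : x ∈ Set.Icc 1 N) : cycleSucc N x ∈ Set.Icc 1 N := by
  simp only [cycleSucc, Set.mem_Icc] at *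
  split_ifs <;> omega

lemma bijOn_cycleSucc (N : ℕ) : Set.BijOn (cycleSucc N) (Set.Icc 1 N) (Set.Icc 1 N) := by
  refine ⟨fun _ => cycleSucc_mem_Icc, ?_, ?_⟩
  · rintro x ⟨hx1, hx2⟩ y ⟨hy1, hy2⟩ h
    simp only [cycleSucc] at h
    split_ifs at h <;> omega
  · rintro y ⟨hy1, hy2⟩
    by_cases h : y = 1
    · exact ⟨N, ⟨by omega, le_rfl⟩, by simp [cycleSucc, h]⟩
    · exact ⟨y - 1, ⟨by omega, by omega⟩, by simp only [cycleSucc]; split_ifs <;> omega⟩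

lemma Set.BijOn.eqOn_of_eqOn_diff_singleton {α β : Type*} {f g : α → β} {s : Set α}
    {t : Set β} {x : α} (hf : Set.BijOn f s t) (hg : Set.SurjOn g s t)
    (h : Set.EqOn f g (s \ {x})) : Set.EqOn f g s := by
  intro z hz
  by_cases hzx : z = x
  · subst hzx
    obtain ⟨y, hy, hgy⟩ := hg (hf.mapsTo hz)
    by_cases hyz : y = z
    · rw [← hgy, hyz]
    · exact absurd (hf.injOn hy hz (by rw [h ⟨hy, hyz⟩, hgy])) hyz
  · exact h ⟨hz, hzx⟩

lemma promoPermSpec_apply_succ {a b i : ℕ} {T : ℕ → ℕ → ℕ} {σ σ' : ℕ → ℕ}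
    (hσ : promoPermSpec a b i T σ) (hσ' : promoPermSpec a b i (promo a b T) σ')
    {j : ℕ} (hj1 : 1 ≤ j) (hj2 : j + 1 ≤ a * b) :
    σ (j + 1) = cycleSucc (a * b) (σ' j) := by
  obtain ⟨t, hd1, hd2, hmod⟩ := hσ.2 (j + 1) ⟨by omega, hj2⟩
  obtain ⟨t', hd1', hd2', hmod'⟩ := hσ'.2 j ⟨hj1, by omega⟩
  simp only [Nat.add_sub_cancel] at hd1 hd2 hmod
  have hiter : (promo a b)^[j - 1] (promo a b T) = (promo a b)^[j] T := by
    rw [← Function.iterate_succ_apply, Nat.succ_eq_add_one, Nat.sub_add_cancel hj1]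
  rw [hiter] at hd1' hd2' hmod'
  obtain rfl : t = t' := DescendsTo.unique ⟨hd1, hd2⟩ ⟨hd1', hd2'⟩
  have hσ'j := hσ'.1.mapsTo (show j ∈ Set.Icc 1 (a * b) from ⟨hj1, by omega⟩)
  refine Nat.ModEq.eq_of_mem_Icc ?_ (hσ.1.mapsTo ⟨by omega, hj2⟩) (cycleSucc_mem_Icc hσ'j)
  calc σ (j + 1) ≡ _ + (j + 1) - 1 [MOD a * b] := hmod
    _ = _ + j - 1 + 1 := by omega
    _ ≡ σ' j + 1 [MOD a * b] := (hmod'.add_right 1).symm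
    _ ≡ cycleSucc (a * b) (σ' j) [MOD a * b] := (cycleSucc_modEq hσ'j.2).symm

theorem promoPerm_rot_general (b i : ℕ)
    (T : ℕ → ℕ → ℕ)
    (σ σ' : ℕ → ℕ) (hσ : promoPermSpec 4 b i T σ)
    (hσ' : promoPermSpec 4 b i (promo 4 b T) σ') :
    ∀ j ∈ Set.Icc 1 (4 * b),
      σ (if j = 4 * b then 1 else j + 1) = (if σ' j = 4 * b then 1 else σ' j + 1) := by
  have hcomm :
      Set.EqOn (σ ∘ cycleSucc (4 * b)) (cycleSucc (4 * b) ∘ σ') (Set.Icc 1 (4 * b)) :=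
    Set.BijOn.eqOn_of_eqOn_diff_singleton (x := 4 * b) (hσ.1.comp (bijOn_cycleSucc _))
      ((bijOn_cycleSucc _).comp hσ'.1).surjOn fun j ⟨⟨hj1, hj2⟩, hjN⟩ => by
        have hjN : j ≠ 4 * b := hjN
        rw [Function.comp_apply, cycleSucc, if_neg hjN]
        exact promoPermSpec_apply_succ hσ hσ' hj1 (by omega)
  exact hcomm

/-- **Promotion permutations rotate under promotion of the tableau**: for `T` a standard
Young tableau of shape `4 × b`, `1 ≤ i ≤ 3`, and `c` the long cycle `(1 2 ⋯ 4b)` on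
`{1,…,4b}`, one has `c⁻¹ ∘ prom_i(T) ∘ c = prom_i(P(T))`, i.e.
`prom_i(T) ∘ c = c ∘ prom_i(P(T))` for any realizations `σ` of `prom_i(T)` and `σ'` of
`prom_i(P(T))`. -/
theorem promoPerm_rot (b i : ℕ) (hi1 : 1 ≤ i) (hi3 : i ≤ 3)
    (T : ℕ → ℕ → ℕ) (hT : IsSYT 4 b T)
    (σ σ' : ℕ → ℕ) (hσ : promoPermSpec 4 b i T σ)
    (hσ' : promoPermSpec 4 b i (promo 4 b T) σ') :
    ∀ j ∈ Set.Icc 1 (4 * b),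
      σ (if j = 4 * b then 1 else j + 1) = (if σ' j = 4 * b then 1 else σ' j + 1) :=
  promoPerm_rot_general b i T σ σ' hσ hσ'
end
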